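/- For every real constant C > 0 and every integer ν ≥ 1, the tail sum Σ_{l=2}^{ν} (C^l / l!) · (M(t)^l)_ν is at most λ^{-1}·(e^{Cλ} − 1 − Cλ)·M_ν, where (M(t)^l)_ν = Σ_{i₁+⋯+i_l = ν, each i_j ≥ 1} M_{i₁}⋯M_{i_l} is the degree-ν coefficient of M(t)^l. -/

import Mathlib

/-! The coefficients `M ν = c ^ ν / (16 c ν²)` satisfy the convolution bound
`∑_{i+j=n} M i M j ≤ λ M n`: writing `1/(i²j²) = (1/i + 1/j)²/n² ≤ 2(1/i² + 1/j²)/n²` gives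
`∑_{i+j=n} 1/(i²j²) ≤ (4/n²) ∑_{i≥1} 1/i² ≤ 8/n²`, and `8/(16c)² ≤ λ/(16c)`. Iterating, the `ν`-th
coefficient of `M(t)^l` is at most `λ^(l-1) M ν`, so the tail sum is bounded by
`λ⁻¹ M ν ∑_{l≥2} (Cλ)^l/l! ≤ λ⁻¹ (e^{Cλ} - 1 - Cλ) M ν`. -/

open Finset

namespace Finset.Nat

theorem sum_antidiagonalTuple_succ {M : Type*} [AddCommMonoid M] (k n : ℕ)
    (F : (Fin (k + 1) → ℕ) → M) :
    ∑ f ∈ antidiagonalTuple (k + 1) n, F f =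
      ∑ p ∈ antidiagonal n, ∑ f ∈ antidiagonalTuple k p.2, F (Fin.cons p.1 f) := by
  rw [sum_sigma']
  refine sum_nbij' (fun f => ⟨(f 0, ∑ i, Fin.tail f i), Fin.tail f⟩)
    (fun x => Fin.cons x.1.1 x.2) ?_ ?_ ?_ ?_ ?_
  · intro f hf
    simp only [mem_sigma, HasAntidiagonal.mem_antidiagonal, mem_antidiagonalTuple,
      and_true] at hf ⊢
    rw [← hf, Fin.sum_univ_succ]
    rfl
  · rintro ⟨⟨a, b⟩, f⟩ h
    simp only [mem_sigma, HasAntidiagonal.mem_antidiagonal, mem_antidiagonalTuple] at h ⊢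
    rw [Fin.sum_cons, h.2, h.1]
  · intro f _
    simp
  · rintro ⟨⟨a, b⟩, f⟩ h
    simp only [mem_sigma, mem_antidiagonalTuple] at h
    simp [h.2]
  · intro f _
    simp

theorem sum_antidiagonalTuple_succ_prod {R : Type*} [CommSemiring R] (g : ℕ → R) (k n : ℕ) :
    ∑ f ∈ antidiagonalTuple (k + 1) n, ∏ j, g (f j) =
      ∑ p ∈ antidiagonal n, g p.1 * ∑ f ∈ antidiagonalTuple k p.2, ∏ j, g (f j) := by
  simp only [sum_antidiagonalTuple_succ, Fin.prod_univ_succ, Fin.cons_zero, Fin.cons_succ,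
    mul_sum]

end Finset.Nat

section OrderedSemiring

variable {R : Type*} [CommSemiring R] [PartialOrder R] [IsOrderedRing R]

theorem sum_antidiagonalTuple_prod_le_pow_mul {g : ℕ → R} {K : R} (hg : ∀ n, 0 ≤ g n)
    (hK : 0 ≤ K) (hconv : ∀ n, ∑ p ∈ antidiagonal n, g p.1 * g p.2 ≤ K * g n) (k n : ℕ) :
    ∑ f ∈ Finset.Nat.antidiagonalTuple (k + 1) n, ∏ j, g (f j) ≤ K ^ k * g n := by
  induction k generalizing n with
  | zero => simp
  | succ k ih =>
    calc ∑ f ∈ Finset.Nat.antidiagonalTuple (k + 1 + 1) n, ∏ j, g (f j)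
        ≤ ∑ p ∈ antidiagonal n, g p.1 * (K ^ k * g p.2) := by
          rw [Finset.Nat.sum_antidiagonalTuple_succ_prod]
          gcongr with p
          · exact hg _
          · exact ih p.2
      _ = K ^ k * ∑ p ∈ antidiagonal n, g p.1 * g p.2 := by
          rw [mul_sum]
          exact sum_congr rfl fun _ _ => mul_left_comm _ _ _
      _ ≤ K ^ (k + 1) * g n := by
          rw [pow_succ, mul_assoc]
          gcongr
          exact hconv n

end OrderedSemiring

theorem sum_filter_pos_antidiagonalTuple_prod {R : Type*} [CommSemiring R] {g : ℕ → R}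
    (hg : g 0 = 0) (k n : ℕ) :
    ∑ f ∈ (Finset.Nat.antidiagonalTuple k n).filter (fun f => ∀ j, 1 ≤ f j), ∏ j, g (f j) =
      ∑ f ∈ Finset.Nat.antidiagonalTuple k n, ∏ j, g (f j) := by
  refine sum_filter_of_ne fun f _ hprod j => ?_
  by_contra! hj
  exact hprod (prod_eq_zero (mem_univ j) (by rw [Nat.lt_one_iff.mp hj, hg]))

theorem sum_antidiagonal_inv_sq_mul_inv_sq_le (n : ℕ) :
    ∑ p ∈ antidiagonal n, ((p.1 : ℝ) ^ 2)⁻¹ * ((p.2 : ℝ) ^ 2)⁻¹ ≤ 8 / (n : ℝ) ^ 2 := by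
  have hterm : ∀ p ∈ antidiagonal n, ((p.1 : ℝ) ^ 2)⁻¹ * ((p.2 : ℝ) ^ 2)⁻¹ ≤
      2 / (n : ℝ) ^ 2 * (((p.1 : ℝ) ^ 2)⁻¹ + ((p.2 : ℝ) ^ 2)⁻¹) := by
    rintro ⟨i, j⟩ hij
    rw [HasAntidiagonal.mem_antidiagonal] at hij
    subst hij
    rcases Nat.eq_zero_or_pos i with rfl | hi
    · rw [Nat.cast_zero, zero_pow two_ne_zero, inv_zero, zero_mul]; positivity
    rcases Nat.eq_zero_or_pos j with rfl | hj
    · rw [Nat.cast_zero, zero_pow two_ne_zero, inv_zero, mul_zero]; positivity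
    have hi' : (0 : ℝ) < i := by exact_mod_cast hi
    have hj' : (0 : ℝ) < j := by exact_mod_cast hj
    push_cast
    rw [div_mul_eq_mul_div, le_div_iff₀ (by positivity)]
    field_simp
    nlinarith [sq_nonneg ((i : ℝ) - j), mul_pos hi' hj']
  have hsum : ∑ p ∈ antidiagonal n, ((p.1 : ℝ) ^ 2)⁻¹ ≤ 2 := by
    rw [Finset.Nat.sum_antidiagonal_eq_sum_range_succ_mk]
    calc ∑ i ∈ range n.succ, ((i : ℝ) ^ 2)⁻¹ = ∑ i ∈ Ioo 0 (n + 1), ((i : ℝ) ^ 2)⁻¹ := by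
          refine (sum_subset (fun i hi => ?_) fun i hi hi' => ?_).symm
          · simp only [mem_Ioo, mem_range] at hi ⊢; omega
          · simp only [mem_Ioo, mem_range, not_and, not_lt] at hi hi'
            obtain rfl : i = 0 := by omega
            simp
      _ ≤ 2 := by simpa using sum_Ioo_inv_sq_le (α := ℝ) 0 (n + 1)
  calc ∑ p ∈ antidiagonal n, ((p.1 : ℝ) ^ 2)⁻¹ * ((p.2 : ℝ) ^ 2)⁻¹
      ≤ 2 / (n : ℝ) ^ 2 * (∑ p ∈ antidiagonal n, ((p.1 : ℝ) ^ 2)⁻¹ +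
          ∑ p ∈ antidiagonal n, ((p.2 : ℝ) ^ 2)⁻¹) := by
        rw [← sum_add_distrib, mul_sum]
        exact sum_le_sum hterm
    _ ≤ 2 / (n : ℝ) ^ 2 * (2 + 2) := by
        gcongr
        simpa only [Prod.fst_swap] using
          (Finset.Nat.sum_antidiagonal_swap (f := fun p => ((p.1 : ℝ) ^ 2)⁻¹)).trans_le hsum
    _ = 8 / (n : ℝ) ^ 2 := by ring

theorem Real.sum_Icc_two_pow_div_factorial_le_exp_sub_one_sub {x : ℝ} (hx : 0 ≤ x) (n : ℕ) :
    ∑ l ∈ Icc 2 n, x ^ l / l.factorial ≤ Real.exp x - 1 - x := by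
  have hhead : ∑ l ∈ range 2, x ^ l / l.factorial = 1 + x := by simp [sum_range_succ]
  calc ∑ l ∈ Icc 2 n, x ^ l / l.factorial ≤ ∑ l ∈ Ico 2 (n + 2), x ^ l / l.factorial :=
        sum_le_sum_of_subset_of_nonneg (fun l hl => by simp only [mem_Icc, mem_Ico] at hl ⊢; omega)
          fun _ _ _ => by positivity
    _ = ∑ l ∈ range (n + 2), x ^ l / l.factorial - (1 + x) := by
        rw [← sum_range_add_sum_Ico _ (by omega : 2 ≤ n + 2), hhead]; ring
    _ ≤ Real.exp x - 1 - x := by linarith [Real.sum_le_exp_of_nonneg hx (n + 2)]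

-- At `ν = 0` the junk value `x / 0 = 0` gives the majorant series its zero constant term.
noncomputable def majorantCoeff (c : ℝ) (ν : ℕ) : ℝ := 1 / (16 * c) * c ^ ν / (ν : ℝ) ^ 2

theorem majorantCoeff_nonneg {c : ℝ} (hc : 0 < c) (ν : ℕ) : 0 ≤ majorantCoeff c ν := by
  unfold majorantCoeff; positivity

theorem majorantCoeff_zero (c : ℝ) : majorantCoeff c 0 = 0 := by simp [majorantCoeff]

theorem sum_antidiagonal_majorantCoeff_mul_le {c : ℝ} (hc : 0 < c) (n : ℕ) :
    ∑ p ∈ antidiagonal n, majorantCoeff c p.1 * majorantCoeff c p.2 ≤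
      c⁻¹ * majorantCoeff c n := by
  have hterm : ∀ p ∈ antidiagonal n, majorantCoeff c p.1 * majorantCoeff c p.2 =
      (1 / (16 * c)) ^ 2 * c ^ n * (((p.1 : ℝ) ^ 2)⁻¹ * ((p.2 : ℝ) ^ 2)⁻¹) := by
    rintro ⟨i, j⟩ hij
    rw [HasAntidiagonal.mem_antidiagonal] at hij
    simp only [majorantCoeff, ← hij, pow_add]
    ring
  calc ∑ p ∈ antidiagonal n, majorantCoeff c p.1 * majorantCoeff c p.2
      = (1 / (16 * c)) ^ 2 * c ^ n *
          ∑ p ∈ antidiagonal n, ((p.1 : ℝ) ^ 2)⁻¹ * ((p.2 : ℝ) ^ 2)⁻¹ := by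
        rw [sum_congr rfl hterm, mul_sum]
    _ ≤ (1 / (16 * c)) ^ 2 * c ^ n * (8 / (n : ℝ) ^ 2) := by
        gcongr
        exact sum_antidiagonal_inv_sq_mul_inv_sq_le n
    _ = (2 * c)⁻¹ * majorantCoeff c n := by
        unfold majorantCoeff; field_simp; ring
    _ ≤ c⁻¹ * majorantCoeff c n := by
        gcongr
        · exact majorantCoeff_nonneg hc n
        · linarith

theorem pow_div_factorial_mul_sum_antidiagonalTuple_majorantCoeff_le {c C : ℝ} (hc : 0 < c)
    (hC : 0 ≤ C) {l : ℕ} (hl : 1 ≤ l) (ν : ℕ) :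
    C ^ l / l.factorial * ∑ f ∈ Finset.Nat.antidiagonalTuple l ν, ∏ j, majorantCoeff c (f j) ≤
      c * majorantCoeff c ν * ((C * (1 / c)) ^ l / l.factorial) := by
  obtain ⟨k, rfl⟩ : ∃ k, l = k + 1 := ⟨l - 1, by omega⟩
  calc C ^ (k + 1) / (k + 1).factorial *
        ∑ f ∈ Finset.Nat.antidiagonalTuple (k + 1) ν, ∏ j, majorantCoeff c (f j)
      ≤ C ^ (k + 1) / (k + 1).factorial * (c⁻¹ ^ k * majorantCoeff c ν) := by
        gcongr
        exact sum_antidiagonalTuple_prod_le_pow_mul (majorantCoeff_nonneg hc)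
          (inv_nonneg.mpr hc.le) (sum_antidiagonal_majorantCoeff_mul_le hc) k ν
    _ = c * majorantCoeff c ν * ((C * (1 / c)) ^ (k + 1) / (k + 1).factorial) := by
        rw [mul_one_div, div_pow, pow_succ c, inv_pow]
        field_simp

/-- Fix `c > 0`, `λ = 1/c`, and `M ν = (1/(16c))·c^ν/ν²`. For every real
constant `C > 0` and every integer `ν ≥ 1`, the tail sum
`∑_{l=2}^{ν} (C^l/l!)·(M(t)^l)_ν` is at most `λ⁻¹·(e^{Cλ} − 1 − Cλ)·M ν`, where
`(M(t)^l)_ν = ∑_{i₁+⋯+i_l = ν, each i_j ≥ 1} M i₁ ⋯ M i_l` is the degree-`ν`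
coefficient of `M(t)^l`. -/
theorem stmt_5 (c lam : ℝ) (hc : 0 < c) (hlam : lam = 1 / c)
    (M : ℕ → ℝ) (hM : ∀ ν : ℕ, M ν = 1 / (16 * c) * c ^ ν / (ν : ℝ) ^ 2) :
    ∀ C : ℝ, 0 < C → ∀ ν : ℕ, 1 ≤ ν →
      ∑ l ∈ Finset.Icc 2 ν,
        (C ^ l / (Nat.factorial l : ℝ)) *
          ∑ f ∈ (Finset.Nat.antidiagonalTuple l ν).filter (fun f => ∀ j, 1 ≤ f j),
            ∏ j, M (f j)
      ≤ lam⁻¹ * (Real.exp (C * lam) - 1 - C * lam) * M ν := by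
  intro C hC ν _
  obtain rfl : M = majorantCoeff c := funext fun ν => hM ν
  subst hlam
  calc _ = ∑ l ∈ Icc 2 ν, C ^ l / l.factorial *
          ∑ f ∈ Finset.Nat.antidiagonalTuple l ν, ∏ j, majorantCoeff c (f j) := by
        simp only [sum_filter_pos_antidiagonalTuple_prod (majorantCoeff_zero c)]
    _ ≤ ∑ l ∈ Icc 2 ν, c * majorantCoeff c ν * ((C * (1 / c)) ^ l / l.factorial) :=
        sum_le_sum fun l hl => pow_div_factorial_mul_sum_antidiagonalTuple_majorantCoeff_le hc
          hC.le (by simp only [mem_Icc] at hl; omega) ν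
    _ = c * majorantCoeff c ν * ∑ l ∈ Icc 2 ν, (C * (1 / c)) ^ l / l.factorial :=
        (mul_sum _ _ _).symm
    _ ≤ c * majorantCoeff c ν * (Real.exp (C * (1 / c)) - 1 - C * (1 / c)) := by
        gcongr
        · exact mul_nonneg hc.le (majorantCoeff_nonneg hc ν)
        · exact Real.sum_Icc_two_pow_div_factorial_le_exp_sub_one_sub (by positivity) ν
    _ = (1 / c)⁻¹ * (Real.exp (C * (1 / c)) - 1 - C * (1 / c)) * majorantCoeff c ν := by
        rw [one_div, inv_inv]; ring
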